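/- Under the Volterra equation hypotheses, for any increasing sequence a(n) → ∞ and any ρ ∈ [0, ∞], the statements limsup |H(n)|/a(n) = ρ, limsup H*(n)/a(n) = ρ, limsup |x(n)|/a(n) = ρ, and limsup x*(n)/a(n) = ρ are all equivalent. -/

import Mathlib

/-!
Summability of `|k|` and sublinearity of `f` make the memory term small: for every `δ > 0`,
`|x(n+1) - H(n+1)| ≤ δ x*(n) + C`. Hence `H* ≤ (1 + δ) x* + C` and `(1 - δ) x* ≤ H* + C'`, so
`H*/a` and `x*/a` have the same limsup. Passing from a sequence to its running maximum does not
change the limsup of the ratio either, because `a` increases to `∞`.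
-/

open Filter Finset Topology

/-- Running maximum of `g` over `{1,…,n}` (value `0` when `n = 0`). -/
noncomputable def runMax1 (g : ℕ → ℝ) (n : ℕ) : ℝ :=
  if h : 1 ≤ n then (Finset.Icc 1 n).sup' (Finset.nonempty_Icc.mpr h) g else 0

/-- Running maximum of `g` over `{0,…,n}`. -/
noncomputable def runMax0 (g : ℕ → ℝ) (n : ℕ) : ℝ :=
  (Finset.Icc 0 n).sup' (Finset.nonempty_Icc.mpr (Nat.zero_le n)) g

section RunningMax

variable {g : ℕ → ℝ} {j n : ℕ} {b : ℝ}

lemma le_runMax0 (g : ℕ → ℝ) (h : j ≤ n) : g j ≤ runMax0 g n :=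
  le_sup' g (mem_Icc.2 ⟨j.zero_le, h⟩)

lemma runMax0_le (hb : ∀ j ≤ n, g j ≤ b) : runMax0 g n ≤ b :=
  sup'_le _ _ fun j hj => hb j (mem_Icc.1 hj).2

lemma runMax0_mono (g : ℕ → ℝ) : Monotone (runMax0 g) :=
  fun _ _ hmn => runMax0_le fun _ hj => le_runMax0 g (hj.trans hmn)

lemma runMax0_nonneg (hg : 0 ≤ g 0) (n : ℕ) : 0 ≤ runMax0 g n :=
  hg.trans (le_runMax0 g n.zero_le)

lemma le_runMax1 (g : ℕ → ℝ) (h1 : 1 ≤ j) (h : j ≤ n) : g j ≤ runMax1 g n := by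
  rw [runMax1, dif_pos (h1.trans h)]
  exact le_sup' g (mem_Icc.2 ⟨h1, h⟩)

lemma runMax1_le (hn : 1 ≤ n) (hb : ∀ j, 1 ≤ j → j ≤ n → g j ≤ b) : runMax1 g n ≤ b := by
  rw [runMax1, dif_pos hn]
  exact sup'_le _ _ fun j hj => hb j (mem_Icc.1 hj).1 (mem_Icc.1 hj).2

lemma runMax1_nonneg (hg : ∀ n, 0 ≤ g n) (n : ℕ) : 0 ≤ runMax1 g n := by
  rcases Nat.eq_zero_or_pos n with rfl | hn
  · simp [runMax1]
  · exact (hg n).trans (le_runMax1 g hn le_rfl)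

lemma runMax1_le_runMax0 (hg : 0 ≤ g 0) (n : ℕ) : runMax1 g n ≤ runMax0 g n := by
  rcases Nat.eq_zero_or_pos n with rfl | hn
  · simpa [runMax1] using runMax0_nonneg hg 0
  · exact runMax1_le hn fun j _ hj => le_runMax0 g hj

end RunningMax

noncomputable def growthRate (a u : ℕ → ℝ) : EReal :=
  limsup (fun n => ((u n / a n : ℝ) : EReal)) atTop

section GrowthRate

variable {a u v : ℕ → ℝ}

lemma growthRate_mono (hapos : ∀ n, 0 < a n) (h : ∀ᶠ n in atTop, u n ≤ v n) :
    growthRate a u ≤ growthRate a v :=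
  limsup_le_limsup <| h.mono fun n hn =>
    EReal.coe_le_coe_iff.2 (div_le_div_of_nonneg_right hn (hapos n).le)

lemma growthRate_nonneg (hapos : ∀ n, 0 < a n) (hu : ∀ n, 0 ≤ u n) : 0 ≤ growthRate a u :=
  le_limsup_of_frequently_le' <| Frequently.of_forall fun n =>
    EReal.coe_nonneg.2 (div_nonneg (hu n) (hapos n).le)

lemma eventually_le_mul_of_growthRate_lt (hapos : ∀ n, 0 < a n) {c : ℝ}
    (h : growthRate a u < c) : ∀ᶠ n in atTop, u n ≤ c * a n :=
  (eventually_lt_of_limsup_lt h).mono fun n hn =>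
    ((div_lt_iff₀ (hapos n)).1 (EReal.coe_lt_coe_iff.1 hn)).le

lemma growthRate_le_of_eventually_le_mul_add (hapos : ∀ n, 0 < a n)
    (ha : Tendsto a atTop atTop) {c C : ℝ} (h : ∀ᶠ n in atTop, v n ≤ c * a n + C) :
    growthRate a v ≤ c := by
  have hreal : Tendsto (fun n => c + C / a n) atTop (𝓝 c) := by
    simpa using tendsto_const_nhds.add (tendsto_const_nhds.div_atTop ha)
  have hlim : Tendsto (fun n => ((c + C / a n : ℝ) : EReal)) atTop (𝓝 c) :=
    (continuous_coe_real_ereal.tendsto c).comp hreal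
  calc growthRate a v ≤ limsup (fun n => ((c + C / a n : ℝ) : EReal)) atTop :=
        limsup_le_limsup <| h.mono fun n hn => EReal.coe_le_coe_iff.2 <| by
          rwa [div_le_iff₀ (hapos n), add_mul, div_mul_cancel₀ _ (hapos n).ne']
    _ = c := hlim.limsup_eq

lemma growthRate_le_of_forall_le_mul_add (hapos : ∀ n, 0 < a n) (ha : Tendsto a atTop atTop)
    (hu : ∀ n, 0 ≤ u n) (h : ∀ l > 1, ∃ C, ∀ᶠ n in atTop, v n ≤ l * u n + C) :
    growthRate a v ≤ growthRate a u := by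
  refine EReal.le_of_forall_lt_iff_le.1 fun c hc => ?_
  obtain ⟨d, hud, hdc⟩ := EReal.exists_between_coe_real hc
  have hd : 0 < d := EReal.coe_pos.1 ((growthRate_nonneg hapos hu).trans_lt hud)
  obtain ⟨l, hl1, hlc⟩ := exists_between ((one_lt_div hd).2 (EReal.coe_lt_coe_iff.1 hdc))
  obtain ⟨C, hC⟩ := h l hl1
  calc growthRate a v ≤ (l * d : ℝ) := growthRate_le_of_eventually_le_mul_add hapos ha (C := C) <| by
        filter_upwards [hC, eventually_le_mul_of_growthRate_lt hapos hud] with n hvn hun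
        nlinarith
    _ ≤ c := EReal.coe_le_coe_iff.2 ((lt_div_iff₀ hd).1 hlc).le

lemma growthRate_runMax0_le (hapos : ∀ n, 0 < a n) (ha : Tendsto a atTop atTop)
    (hmono : Monotone a) {g : ℕ → ℝ} (hg : ∀ n, 0 ≤ g n) :
    growthRate a (runMax0 g) ≤ growthRate a g := by
  refine EReal.le_of_forall_lt_iff_le.1 fun c hc => ?_
  have hc0 : 0 ≤ c := EReal.coe_nonneg.1 ((growthRate_nonneg hapos hg).trans hc.le)
  obtain ⟨N, hN⟩ := eventually_atTop.1 (eventually_le_mul_of_growthRate_lt hapos hc)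
  refine growthRate_le_of_eventually_le_mul_add hapos ha (C := runMax0 g N) <|
    eventually_atTop.2 ⟨N, fun n _ => runMax0_le fun j hjn => ?_⟩
  rcases le_total j N with hjN | hNj
  · have := le_runMax0 g hjN
    nlinarith [hapos n]
  · have := hN j hNj
    have := runMax0_nonneg (hg 0) N
    nlinarith [hmono hjn]

end GrowthRate

lemma Continuous.exists_abs_le_mul_abs_add {f : ℝ → ℝ} (hf : Continuous f)
    (hsub : Tendsto (fun y => f y / y) (cocompact ℝ) (𝓝 0)) {ε : ℝ} (hε : 0 < ε) :
    ∃ K, ∀ y, |f y| ≤ ε * |y| + K := by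
  obtain ⟨t, ht, hts⟩ := mem_cocompact.1 (Metric.tendsto_nhds.1 hsub ε hε)
  -- `0` is added to `t` because `f 0 / 0 = 0` says nothing about `f 0`.
  obtain ⟨K, hK⟩ := (ht.insert 0).exists_bound_of_continuousOn hf.continuousOn
  have hK0 : 0 ≤ K := (norm_nonneg _).trans (hK 0 (Set.mem_insert _ _))
  refine ⟨K, fun y => ?_⟩
  by_cases hy : y ∈ insert 0 t
  · have := hK y hy
    rw [Real.norm_eq_abs] at this
    nlinarith [abs_nonneg y]
  · have hy0 : y ≠ 0 := fun h => hy (h ▸ Set.mem_insert _ _)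
    have : dist (f y / y) 0 < ε := hts fun h => hy (Set.mem_insert_of_mem _ h)
    rw [Real.dist_eq, sub_zero, abs_div, div_lt_iff₀ (abs_pos.2 hy0)] at this
    linarith

lemma abs_sum_range_mul_le_tsum_mul {k g : ℕ → ℝ} (hk : Summable fun j => |k j|) {n : ℕ}
    {B : ℝ} (hB : ∀ j ≤ n, |g j| ≤ B) :
    |∑ j ∈ range (n + 1), k (n - j) * g j| ≤ (∑' i, |k i|) * B := by
  have hB0 : 0 ≤ B := (abs_nonneg _).trans (hB 0 n.zero_le)
  calc |∑ j ∈ range (n + 1), k (n - j) * g j| ≤ ∑ j ∈ range (n + 1), |k (n - j)| * B := by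
        refine (abs_sum_le_sum_abs _ _).trans (sum_le_sum fun j hj => ?_)
        rw [abs_mul]
        exact mul_le_mul_of_nonneg_left (hB j (Nat.lt_succ_iff.1 (mem_range.1 hj))) (abs_nonneg _)
    _ = (∑ j ∈ range (n + 1), |k j|) * B := by
        rw [← sum_mul, ← sum_range_reflect (fun i => |k i|) (n + 1)]
        simp
    _ ≤ (∑' i, |k i|) * B :=
        mul_le_mul_of_nonneg_right (hk.sum_le_tsum _ fun i _ => abs_nonneg _) hB0

section Volterra

variable {f : ℝ → ℝ} {k H x : ℕ → ℝ}
  (hf : Continuous f) (hsub : Tendsto (fun y => f y / y) (cocompact ℝ) (𝓝 0))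
  (hk : Summable fun j => |k j|)
  (hx : ∀ n : ℕ, x (n + 1) = H (n + 1) + ∑ j ∈ range (n + 1), k (n - j) * f (x j))
include hf hsub hk hx

lemma exists_abs_sub_le_mul_runMax0_add {δ : ℝ} (hδ : 0 < δ) :
    ∃ C ≥ 0, ∀ n, |x (n + 1) - H (n + 1)| ≤ δ * runMax0 (fun j => |x j|) n + C := by
  set T := ∑' i, |k i|
  have hT : 0 ≤ T := tsum_nonneg fun i => abs_nonneg _
  obtain ⟨K, hK⟩ := hf.exists_abs_le_mul_abs_add hsub (ε := δ / (T + 1)) (by positivity)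
  have hK0 : 0 ≤ K := (abs_nonneg _).trans (by simpa using hK 0)
  have hTδ : T * (δ / (T + 1)) ≤ δ := by
    rw [mul_div_assoc', div_le_iff₀ (by positivity)]
    nlinarith
  refine ⟨T * K, by positivity, fun n => ?_⟩
  have hX := runMax0_nonneg (g := fun j => |x j|) (abs_nonneg (x 0)) n
  rw [hx n, add_sub_cancel_left]
  calc _ ≤ T * (δ / (T + 1) * runMax0 (fun j => |x j|) n + K) :=
        abs_sum_range_mul_le_tsum_mul hk fun j hj =>
          (hK _).trans (by gcongr; exact le_runMax0 (fun j => |x j|) hj)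
    _ ≤ δ * runMax0 (fun j => |x j|) n + T * K := by
        nlinarith [mul_le_mul_of_nonneg_right hTδ hX]

lemma exists_runMax1_abs_le_mul_runMax0_abs_add {l : ℝ} (hl : 1 < l) :
    ∃ C, ∀ᶠ n in atTop,
      runMax1 (fun j => |H j|) n ≤ l * runMax0 (fun j => |x j|) n + C := by
  obtain ⟨C, -, hC⟩ := exists_abs_sub_le_mul_runMax0_add hf hsub hk hx (sub_pos.2 hl)
  refine ⟨C, eventually_atTop.2 ⟨1, fun n hn => runMax1_le hn fun j hj hjn => ?_⟩⟩
  obtain ⟨m, rfl⟩ := Nat.exists_eq_add_of_le' hj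
  have hHx := abs_sub_abs_le_abs_sub (H (m + 1)) (x (m + 1))
  rw [abs_sub_comm] at hHx
  have := hC m
  have := le_runMax0 (fun j => |x j|) hjn
  have := mul_le_mul_of_nonneg_left (runMax0_mono (fun j => |x j|) (m.le_succ.trans hjn))
    (sub_nonneg.2 hl.le)
  linarith

lemma exists_runMax0_abs_le_mul_runMax1_abs_add {l : ℝ} (hl : 1 < l) :
    ∃ C, ∀ n, runMax0 (fun j => |x j|) n ≤ l * runMax1 (fun j => |H j|) n + C := by
  have hl0 : 0 < l := one_pos.trans hl
  obtain ⟨C, hC0, hC⟩ := exists_abs_sub_le_mul_runMax0_add hf hsub hk hx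
    (sub_pos.2 (inv_lt_one_of_one_lt₀ hl))
  refine ⟨l * (C + |x 0|), fun n => ?_⟩
  have hH := runMax1_nonneg (fun j => abs_nonneg (H j)) n
  have hX := runMax0_nonneg (g := fun j => |x j|) (abs_nonneg (x 0)) n
  have hδX := mul_nonneg (sub_nonneg.2 (inv_lt_one_of_one_lt₀ hl).le) hX
  have key : runMax0 (fun j => |x j|) n ≤
      runMax1 (fun j => |H j|) n + (1 - l⁻¹) * runMax0 (fun j => |x j|) n + (C + |x 0|) := by
    refine runMax0_le fun j hjn => ?_
    rcases j with _ | m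
    · linarith
    · have hxH := abs_sub_abs_le_abs_sub (x (m + 1)) (H (m + 1))
      have := hC m
      have := le_runMax1 (fun j => |H j|) (Nat.succ_pos m) hjn
      have := mul_le_mul_of_nonneg_left (runMax0_mono (fun j => |x j|) (m.le_succ.trans hjn))
        (sub_nonneg.2 (inv_lt_one_of_one_lt₀ hl).le)
      linarith [abs_nonneg (x 0)]
  calc runMax0 (fun j => |x j|) n = l * (l⁻¹ * runMax0 (fun j => |x j|) n) := by
        field_simp
    _ ≤ l * (runMax1 (fun j => |H j|) n + (C + |x 0|)) := by
        gcongr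
        linarith
    _ = l * runMax1 (fun j => |H j|) n + l * (C + |x 0|) := by ring

end Volterra

theorem stmt12_general
(f : ℝ → ℝ) (k H x : ℕ → ℝ)
    (hf : Continuous f)
    (hsub : Filter.Tendsto (fun y => f y / y) (Filter.cocompact ℝ) (nhds 0))
    (hk : Summable (fun j => |k j|))
    (hx : ∀ n : ℕ, x (n + 1) = H (n + 1) + ∑ j ∈ Finset.range (n + 1), k (n - j) * f (x j))
    (a : ℕ → ℝ) (hmono : Monotone a) (hapos : ∀ n, 0 < a n)
    (ha : Filter.Tendsto a Filter.atTop Filter.atTop)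
    (ρ : EReal) :
    List.TFAE
      [Filter.limsup (fun n => ((|H n| / a n : ℝ) : EReal)) Filter.atTop = ρ,
       Filter.limsup (fun n => ((runMax1 (fun j => |H j|) n / a n : ℝ) : EReal))
         Filter.atTop = ρ,
       Filter.limsup (fun n => ((|x n| / a n : ℝ) : EReal)) Filter.atTop = ρ,
       Filter.limsup (fun n => ((runMax0 (fun j => |x j|) n / a n : ℝ) : EReal))
         Filter.atTop = ρ] := by
  have hH : growthRate a (fun n => |H n|) = growthRate a (runMax1 fun j => |H j|) :=
    le_antisymm
      (growthRate_mono hapos (eventually_atTop.2 ⟨1, fun n hn => le_runMax1 (fun j => |H j|) hn le_rfl⟩))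
      ((growthRate_mono hapos (.of_forall (runMax1_le_runMax0 (abs_nonneg (H 0))))).trans
        (growthRate_runMax0_le hapos ha hmono fun n => abs_nonneg (H n)))
  have hX : growthRate a (fun n => |x n|) = growthRate a (runMax0 fun j => |x j|) :=
    le_antisymm (growthRate_mono hapos (.of_forall fun n => le_runMax0 (fun j => |x j|) le_rfl))
      (growthRate_runMax0_le hapos ha hmono fun n => abs_nonneg (x n))
  have hHX : growthRate a (runMax1 fun j => |H j|) = growthRate a (runMax0 fun j => |x j|) :=
    le_antisymm
      (growthRate_le_of_forall_le_mul_add hapos ha (runMax0_nonneg (g := fun j => |x j|) (abs_nonneg (x 0)))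
        fun _ hl => exists_runMax1_abs_le_mul_runMax0_abs_add hf hsub hk hx hl)
      (growthRate_le_of_forall_le_mul_add hapos ha (runMax1_nonneg fun j => abs_nonneg (H j))
        fun _ hl => (exists_runMax0_abs_le_mul_runMax1_abs_add hf hsub hk hx hl).imp
          fun _ hC => .of_forall hC)
  change List.TFAE [growthRate a (fun n => |H n|) = ρ, growthRate a (runMax1 fun j => |H j|) = ρ,
    growthRate a (fun n => |x n|) = ρ, growthRate a (runMax0 fun j => |x j|) = ρ]
  rw [hH, hX, hHX]
  simp [List.tfae_cons_self, List.tfae_singleton]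

theorem stmt12
(f : ℝ → ℝ) (k H x : ℕ → ℝ) (ξ : ℝ)
    (hf : Continuous f)
    (hsub : Filter.Tendsto (fun y => f y / y) (Filter.cocompact ℝ) (nhds 0))
    (hk : Summable (fun j => |k j|))
    (hx0 : x 0 = ξ)
    (hx : ∀ n : ℕ, x (n + 1) = H (n + 1) + ∑ j ∈ Finset.range (n + 1), k (n - j) * f (x j))
    (a : ℕ → ℝ) (hmono : Monotone a) (hapos : ∀ n, 0 < a n)
    (ha : Filter.Tendsto a Filter.atTop Filter.atTop)
    (ρ : EReal) (hρ : 0 ≤ ρ) :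
    List.TFAE
      [Filter.limsup (fun n => ((|H n| / a n : ℝ) : EReal)) Filter.atTop = ρ,
       Filter.limsup (fun n => ((runMax1 (fun j => |H j|) n / a n : ℝ) : EReal))
         Filter.atTop = ρ,
       Filter.limsup (fun n => ((|x n| / a n : ℝ) : EReal)) Filter.atTop = ρ,
       Filter.limsup (fun n => ((runMax0 (fun j => |x j|) n / a n : ℝ) : EReal))
         Filter.atTop = ρ] :=
  stmt12_general f k H x hf hsub hk hx a hmono hapos ha ρ
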